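/- Let ω, σ be locally finite positive Borel measures on ℝⁿ with σ ∈ A_∞ (i.e., σ(E)/σ(I) ≤ C(|E|/|I|)^ε for all cubes I and measurable E ⊂ I). If the classical two-weight A_p condition A_p(ω,σ) = sup_I (ω(I)/|I|)^{1/p}(σ(I)/|I|)^{1/p'} is finite, then the dyadic Sawyer testing condition holds: for every cube I, ∫_I (M_d(1_I σ))^p dω ≤ C' σ(I), where M_d is the dyadic maximal operator. -/

import Mathlib

open MeasureTheory ENNReal

structure Cube (n : ℕ) where
  c : Fin n → ℝ
  r : ℝ
  hr : 0 < r

namespace Cube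

def set {n : ℕ} (I : Cube n) : Set (Fin n → ℝ) :=
  {x | ∀ i, I.c i - I.r ≤ x i ∧ x i < I.c i + I.r}

noncomputable def side {n : ℕ} (I : Cube n) : ℝ := 2 * I.r

noncomputable def vol {n : ℕ} (I : Cube n) : ℝ := (2 * I.r) ^ n

def double {n : ℕ} (I : Cube n) : Cube n := ⟨I.c, 2 * I.r, by have := I.hr; linarith⟩

def triple {n : ℕ} (I : Cube n) : Cube n := ⟨I.c, 3 * I.r, by have := I.hr; linarith⟩

end Cube

noncomputable def poisson {n : ℕ} (I : Cube n) (ω : Measure (Fin n → ℝ)) : ℝ≥0∞ :=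
  ∫⁻ x, (ENNReal.ofReal (I.side / (I.side + Metric.infDist x I.set) ^ 2)) ^ n ∂ω

noncomputable def maximal {n : ℕ} (μ : Measure (Fin n → ℝ)) (x : Fin n → ℝ) : ℝ≥0∞ :=
  ⨆ (I : Cube n) (_ : x ∈ I.set), μ I.set / ENNReal.ofReal I.vol

noncomputable def wMass {n : ℕ} (w : (Fin n → ℝ) → ℝ≥0∞) (E : Set (Fin n → ℝ)) : ℝ≥0∞ :=
  ∫⁻ x in E, w x


/-- A dyadic cube `∏ᵢ [posᵢ 2ᵏ, (posᵢ+1) 2ᵏ)` in `ℝⁿ`. -/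
structure DyadicCube (n : ℕ) where
  k : ℤ
  pos : Fin n → ℤ

namespace DyadicCube

def set {n : ℕ} (D : DyadicCube n) : Set (Fin n → ℝ) :=
  {x | ∀ i, (D.pos i : ℝ) * (2:ℝ) ^ D.k ≤ x i ∧ x i < ((D.pos i : ℝ) + 1) * (2:ℝ) ^ D.k}

noncomputable def vol {n : ℕ} (D : DyadicCube n) : ℝ := ((2:ℝ) ^ D.k) ^ n

end DyadicCube

/-- The dyadic maximal function of a measure. -/
noncomputable def dyadicMaximal {n : ℕ} (μ : Measure (Fin n → ℝ)) (x : Fin n → ℝ) : ℝ≥0∞ :=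
  ⨆ (D : DyadicCube n) (_ : x ∈ D.set), μ D.set / ENNReal.ofReal D.vol

/-- The classical two-weight `A_p` characteristic. -/
noncomputable def Ap {n : ℕ} (p : ℝ) (ω σ : Measure (Fin n → ℝ)) : ℝ≥0∞ :=
  ⨆ I : Cube n, (ω I.set / ENNReal.ofReal I.vol) ^ (1 / p) *
    (σ I.set / ENNReal.ofReal I.vol) ^ (1 - 1 / p)

/-- The `A_∞` condition for a measure: `σ(E)/σ(I) ≤ C (|E|/|I|)^ε`. -/
def IsAInfty {n : ℕ} (σ : Measure (Fin n → ℝ)) : Prop :=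
  ∃ C > (0:ℝ), ∃ ε > (0:ℝ), ∀ I : Cube n, ∀ E : Set (Fin n → ℝ),
    E ⊆ I.set → MeasurableSet E →
    σ E ≤ ENNReal.ofReal (C * ((volume E).toReal / I.vol) ^ ε) * σ I.set

/-!
Fix a cube `I`, put `τ = 1_I σ` and let `λ = σ(I)/|I|`. Split `∫_I (M_d τ)^p dω` along the level
sets `Ω_j = {M_d τ > 2^j λ}`. Each `Ω_j` is the disjoint union of the maximal dyadic cubes `Q`
with `2^j λ |Q| < τ(Q)`, and on every such cube the `A_p` condition gives
`(2^j λ)^p ω(Q) ≤ A_p^p τ(Q)`, so the `j`-th layer contributes at most `2^p A_p^p τ(Ω_j)`. The same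
cubes give the weak-type bound `|Ω_j| ≤ τ(Ω_j)/(2^j λ) ≤ 2^{-j} |I|`, which `A_∞` turns into
`τ(Ω_j) = σ(Ω_j ∩ I) ≤ C 2^{-jε} σ(I)`: the layers form a geometric series. The bottom layer
`{M_d τ ≤ λ}` costs `λ^p ω(I) ≤ A_p^p σ(I)`, again by `A_p`.
-/

namespace Cube

variable {n : ℕ}

theorem vol_pos (I : Cube n) : 0 < I.vol := by
  have := I.hr
  unfold vol
  positivity

theorem measurableSet_set (I : Cube n) : MeasurableSet I.set := by
  have : I.set = Set.univ.pi fun i => Set.Ico (I.c i - I.r) (I.c i + I.r) := by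
    ext x
    simp [set, Set.mem_pi]
  rw [this]
  exact MeasurableSet.univ_pi fun _ => measurableSet_Ico

theorem measure_lt_top (μ : Measure (Fin n → ℝ)) [IsLocallyFiniteMeasure μ] (I : Cube n) :
    μ I.set < ⊤ := by
  refine (measure_mono fun x hx => ?_).trans_lt
    (isCompact_Icc (a := fun i => I.c i - I.r) (b := fun i => I.c i + I.r)).measure_lt_top
  exact ⟨fun i => (hx i).1, fun i => (hx i).2.le⟩

end Cube

namespace DyadicCube

variable {n : ℕ}

instance : Countable (DyadicCube n) :=
  Function.Injective.countable (f := fun D : DyadicCube n => (D.k, D.pos))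
    fun ⟨_, _⟩ ⟨_, _⟩ h => by simpa using h

theorem set_eq_pi (D : DyadicCube n) : D.set = Set.univ.pi fun i =>
    Set.Ico ((D.pos i : ℝ) * (2 : ℝ) ^ D.k) (((D.pos i : ℝ) + 1) * (2 : ℝ) ^ D.k) := by
  ext x
  simp [set, Set.mem_pi]

theorem measurableSet_set (D : DyadicCube n) : MeasurableSet D.set := by
  rw [set_eq_pi]
  exact MeasurableSet.univ_pi fun _ => measurableSet_Ico

theorem vol_pos (D : DyadicCube n) : 0 < D.vol :=
  pow_pos (_root_.zpow_pos two_pos _) _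

theorem volume_set (D : DyadicCube n) : volume D.set = ENNReal.ofReal D.vol := by
  simp only [set_eq_pi, volume_pi_pi, Real.volume_Ico, add_mul, one_mul, add_sub_cancel_left,
    Finset.prod_const, Finset.card_univ, Fintype.card_fin, vol]
  rw [ENNReal.ofReal_pow (_root_.zpow_pos two_pos _).le]

noncomputable def toCube (D : DyadicCube n) : Cube n :=
  ⟨fun i => (D.pos i : ℝ) * 2 ^ D.k + 2 ^ D.k / 2, 2 ^ D.k / 2, by positivity⟩

theorem set_toCube (D : DyadicCube n) : D.toCube.set = D.set := by
  ext x
  simp only [Cube.set, toCube, set, Set.mem_ofPred_eq]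
  refine forall_congr' fun i => and_congr ?_ ?_ <;> constructor <;> intro <;> linarith

theorem vol_toCube (D : DyadicCube n) : D.toCube.vol = D.vol := by
  simp only [Cube.vol, toCube, vol, mul_div_cancel₀ _ (two_ne_zero (α := ℝ))]

noncomputable def ofPoint (k : ℤ) (x : Fin n → ℝ) : DyadicCube n :=
  ⟨k, fun i => ⌊x i / (2 : ℝ) ^ k⌋⟩

theorem mem_set_iff {D : DyadicCube n} {x : Fin n → ℝ} : x ∈ D.set ↔ ofPoint D.k x = D := by
  obtain ⟨k, pos⟩ := D
  have h2 : (0 : ℝ) < 2 ^ k := _root_.zpow_pos two_pos _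
  simp only [set, ofPoint, Set.mem_ofPred_eq, mk.injEq, true_and, funext_iff, Int.floor_eq_iff,
    le_div_iff₀ h2, div_lt_iff₀ h2]

theorem mem_ofPoint (k : ℤ) (x : Fin n → ℝ) : x ∈ (ofPoint k x).set :=
  mem_set_iff.mpr rfl

theorem ofPoint_eq_of_le {k k' : ℤ} (hk : k ≤ k') {x y : Fin n → ℝ}
    (h : ofPoint k x = ofPoint k y) : ofPoint k' x = ofPoint k' y := by
  obtain ⟨d, rfl⟩ := Int.le.dest hk
  have hdiv : ∀ z : ℝ, z / (2 : ℝ) ^ (k + d) = z / 2 ^ k / ((2 ^ d : ℕ) : ℝ) := by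
    intro z
    rw [zpow_add₀ two_ne_zero, div_div]
    norm_cast
  simp only [ofPoint, mk.injEq, true_and, funext_iff] at h ⊢
  intro i
  rw [hdiv, hdiv, Int.floor_div_natCast, Int.floor_div_natCast, h i]

/-- The maximal cubes of `F` are pairwise disjoint and cover `⋃ F`. -/
theorem exists_pairwiseDisjoint_biUnion_eq {F : Set (DyadicCube n)} (hF : BddAbove (k '' F)) :
    ∃ S ⊆ F, S.PairwiseDisjoint set ∧ ⋃ D ∈ S, D.set = ⋃ D ∈ F, D.set := by
  obtain ⟨K, hK⟩ := hF
  refine ⟨{D ∈ F | ∀ D' ∈ F, ∀ x ∈ D.set, x ∈ D'.set → D'.k ≤ D.k}, fun D hD => hD.1, ?_, ?_⟩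
  · rintro D₁ ⟨hF₁, h₁⟩ D₂ ⟨hF₂, h₂⟩ hne
    refine Set.disjoint_left.mpr fun x hx₁ hx₂ => hne ?_
    have hk : D₁.k = D₂.k := le_antisymm (h₂ D₁ hF₁ x hx₂ hx₁) (h₁ D₂ hF₂ x hx₁ hx₂)
    rw [← mem_set_iff.mp hx₁, ← mem_set_iff.mp hx₂, hk]
  refine subset_antisymm (Set.biUnion_mono (fun D hD => hD.1) fun _ _ => le_rfl) ?_
  simp only [Set.iUnion_subset_iff]
  intro D hD x hx
  obtain ⟨kx, hkx, hmax⟩ := Int.exists_greatest_of_bdd (P := fun k => ofPoint k x ∈ F)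
    ⟨K, fun k hk => hK ⟨_, hk, rfl⟩⟩ ⟨D.k, by rwa [mem_set_iff.mp hx]⟩
  refine Set.mem_biUnion ⟨hkx, fun D' hD' y hy hy' => ?_⟩ (mem_ofPoint kx x)
  by_contra! hlt
  have hD' : ofPoint D'.k x = D' := by
    rw [← mem_set_iff.mp hy']
    exact ofPoint_eq_of_le hlt.le (mem_set_iff.mp hy).symm
  exact hlt.not_ge (hmax D'.k (by rwa [hD']))

theorem bddAbove_k_image_setOf_vol_le (hn : 0 < n) (B : ℝ) :
    BddAbove (k '' {D : DyadicCube n | D.vol ≤ B}) := by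
  obtain ⟨N, hN⟩ := pow_unbounded_of_one_lt B one_lt_two
  refine ⟨N, ?_⟩
  rintro _ ⟨D, hD, rfl⟩
  by_contra! hlt
  have h1 : (1 : ℝ) ≤ 2 ^ D.k := one_le_zpow₀ one_le_two (by omega)
  have : (2 : ℝ) ^ (N : ℤ) ≤ D.vol :=
    (zpow_le_zpow_right₀ one_le_two hlt.le).trans (le_self_pow₀ h1 hn.ne')
  rw [zpow_natCast] at this
  linarith [hD.trans_lt hN]

theorem bddAbove_k_image_setOf_mul_vol_lt (hn : 0 < n) (μ : Measure (Fin n → ℝ))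
    [IsFiniteMeasure μ] {t : ℝ≥0∞} (ht : t ≠ 0) :
    BddAbove (k '' {D : DyadicCube n | t * ENNReal.ofReal D.vol < μ D.set}) := by
  have hμ := measure_ne_top μ Set.univ
  refine (bddAbove_k_image_setOf_vol_le hn (μ Set.univ / t).toReal).mono ?_
  refine Set.image_mono fun D hD => ?_
  rw [Set.mem_ofPred_eq, ← ENNReal.ofReal_le_iff_le_toReal (ENNReal.div_ne_top hμ ht),
    ENNReal.le_div_iff_mul_le (.inl ht) (.inr hμ), mul_comm]
  exact hD.le.trans (measure_mono (Set.subset_univ _))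

end DyadicCube

theorem measurable_dyadicMaximal {n : ℕ} (μ : Measure (Fin n → ℝ)) :
    Measurable (dyadicMaximal μ) := by
  refine Measurable.iSup fun D => ?_
  convert (measurable_const (a := μ D.set / ENNReal.ofReal D.vol)).indicator
    D.measurableSet_set with x
  by_cases hx : x ∈ D.set <;> simp [hx]

theorem setOf_lt_dyadicMaximal_eq_biUnion {n : ℕ} (μ : Measure (Fin n → ℝ)) (t : ℝ≥0∞) :
    {x | t < dyadicMaximal μ x} =
      ⋃ D ∈ {D : DyadicCube n | t * ENNReal.ofReal D.vol < μ D.set}, D.set := by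
  ext x
  have hv : ∀ D : DyadicCube n, ENNReal.ofReal D.vol ≠ 0 := fun D =>
    (ENNReal.ofReal_pos.mpr D.vol_pos).ne'
  simp [dyadicMaximal, lt_iSup_iff, and_comm,
    ENNReal.lt_div_iff_mul_lt (.inl (hv _)) (.inl ofReal_ne_top)]

/-- Calderón–Zygmund: `{M_d μ > t}` is the disjoint union of the maximal dyadic cubes on which the
average of `μ` exceeds `t`, so a comparison of measures on those cubes passes to the level set. -/
theorem mul_measure_setOf_lt_dyadicMaximal_le {n : ℕ} (hn : 0 < n) (μ ν : Measure (Fin n → ℝ))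
    [IsFiniteMeasure μ] {t a b : ℝ≥0∞} (ht : t ≠ 0)
    (h : ∀ D : DyadicCube n, t * ENNReal.ofReal D.vol < μ D.set → a * ν D.set ≤ b * μ D.set) :
    a * ν {x | t < dyadicMaximal μ x} ≤ b * μ {x | t < dyadicMaximal μ x} := by
  obtain ⟨S, hSF, hdisj, hS⟩ := DyadicCube.exists_pairwiseDisjoint_biUnion_eq
    (DyadicCube.bddAbove_k_image_setOf_mul_vol_lt hn μ ht)
  rw [setOf_lt_dyadicMaximal_eq_biUnion, ← hS]
  calc a * ν (⋃ D ∈ S, D.set) ≤ a * ∑' D : S, ν (D : DyadicCube n).set := by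
        gcongr
        exact measure_biUnion_le ν S.to_countable _
    _ = ∑' D : S, a * ν (D : DyadicCube n).set := ENNReal.tsum_mul_left.symm
    _ ≤ ∑' D : S, b * μ (D : DyadicCube n).set := ENNReal.tsum_le_tsum fun D => h D (hSF D.2)
    _ = b * μ (⋃ D ∈ S, D.set) := by
        rw [ENNReal.tsum_mul_left,
          measure_biUnion S.to_countable hdisj fun D _ => D.measurableSet_set]

theorem mul_volume_setOf_lt_dyadicMaximal_le {n : ℕ} (hn : 0 < n) (μ : Measure (Fin n → ℝ))
    [IsFiniteMeasure μ] {t : ℝ≥0∞} (ht : t ≠ 0) :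
    t * volume {x | t < dyadicMaximal μ x} ≤ μ {x | t < dyadicMaximal μ x} := by
  simpa using mul_measure_setOf_lt_dyadicMaximal_le hn μ volume (b := 1) ht fun D hD => by
    rw [D.volume_set, one_mul]
    exact hD.le

theorem measure_mul_rpow_le_Ap_rpow {n : ℕ} {p : ℝ} (hp : 1 ≤ p) (ω σ : Measure (Fin n → ℝ))
    (J : Cube n) :
    ω J.set * σ J.set ^ (p - 1) ≤ Ap p ω σ ^ p * ENNReal.ofReal J.vol ^ p := by
  set v := ENNReal.ofReal J.vol
  have hv : v ≠ 0 := (ENNReal.ofReal_pos.mpr J.vol_pos).ne'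
  have hp0 : 0 < p := zero_lt_one.trans_le hp
  have hp1 : 0 ≤ p - 1 := sub_nonneg.mpr hp
  have hJ : (ω J.set / v) ^ (1 / p) * (σ J.set / v) ^ (1 - 1 / p) ≤ Ap p ω σ :=
    le_iSup (fun I : Cube n => (ω I.set / ENNReal.ofReal I.vol) ^ (1 / p) *
      (σ I.set / ENNReal.ofReal I.vol) ^ (1 - 1 / p)) J
  have hJp := ENNReal.rpow_le_rpow hJ hp0.le
  rw [ENNReal.mul_rpow_of_nonneg _ _ hp0.le, ← ENNReal.rpow_mul, ← ENNReal.rpow_mul,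
    one_div_mul_cancel hp0.ne', ENNReal.rpow_one, show (1 - 1 / p) * p = p - 1 by field_simp,
    ENNReal.div_rpow_of_nonneg _ _ hp1] at hJp
  have hvp : v ^ (p - 1) ≠ 0 := (ENNReal.rpow_pos (pos_iff_ne_zero.mpr hv) ofReal_ne_top).ne'
  calc ω J.set * σ J.set ^ (p - 1)
      = (ω J.set / v * v) * (σ J.set ^ (p - 1) / v ^ (p - 1) * v ^ (p - 1)) := by
        rw [ENNReal.div_mul_cancel hv ofReal_ne_top,
          ENNReal.div_mul_cancel hvp (ENNReal.rpow_ne_top_of_nonneg hp1 ofReal_ne_top)]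
    _ = (ω J.set / v * (σ J.set ^ (p - 1) / v ^ (p - 1))) * v ^ (1 + (p - 1)) := by
        rw [ENNReal.rpow_add_of_nonneg _ _ zero_le_one hp1, ENNReal.rpow_one]
        ring
    _ ≤ Ap p ω σ ^ p * v ^ p := by
        rw [add_sub_cancel]
        gcongr

theorem rpow_mul_measure_le_Ap_rpow_mul {n : ℕ} {p : ℝ} (hp : 1 ≤ p)
    (ω σ : Measure (Fin n → ℝ)) (J : Cube n) {t a : ℝ≥0∞} (hta : t * ENNReal.ofReal J.vol ≤ a)
    (haσ : a ≤ σ J.set) (hσ : σ J.set ≠ ⊤) :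
    t ^ p * ω J.set ≤ Ap p ω σ ^ p * a := by
  have hv : ENNReal.ofReal J.vol ≠ 0 := (ENNReal.ofReal_pos.mpr J.vol_pos).ne'
  have hp0 : 0 < p := zero_lt_one.trans_le hp
  have hp1 : 0 ≤ p - 1 := sub_nonneg.mpr hp
  rcases eq_or_ne (σ J.set) 0 with hσ0 | hσ0
  · have ht : t = 0 := by simpa [hv] using hta.trans (haσ.trans hσ0.le)
    simp [ht, ENNReal.zero_rpow_of_pos hp0]
  have hσp : σ J.set ^ (p - 1) ≠ 0 := (ENNReal.rpow_pos (pos_iff_ne_zero.mpr hσ0) hσ).ne'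
  rw [← ENNReal.mul_le_mul_iff_left hσp (ENNReal.rpow_ne_top_of_nonneg hp1 hσ)]
  calc t ^ p * ω J.set * σ J.set ^ (p - 1)
      ≤ t ^ p * (Ap p ω σ ^ p * ENNReal.ofReal J.vol ^ p) := by
        rw [mul_assoc]
        exact mul_le_mul_right (measure_mul_rpow_le_Ap_rpow hp ω σ J) _
    _ = Ap p ω σ ^ p * (t * ENNReal.ofReal J.vol) ^ (1 + (p - 1)) := by
        rw [add_sub_cancel, ENNReal.mul_rpow_of_nonneg _ _ hp0.le]
        ring
    _ = Ap p ω σ ^ p * ((t * ENNReal.ofReal J.vol) * (t * ENNReal.ofReal J.vol) ^ (p - 1)) := by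
        rw [ENNReal.rpow_add_of_nonneg _ _ zero_le_one hp1, ENNReal.rpow_one]
    _ ≤ Ap p ω σ ^ p * (a * σ J.set ^ (p - 1)) := by
        gcongr
        exact hta.trans haσ
    _ = Ap p ω σ ^ p * a * σ J.set ^ (p - 1) := (mul_assoc _ _ _).symm

theorem rpow_mul_measure_setOf_lt_dyadicMaximal_le {n : ℕ} (hn : 0 < n) {p : ℝ} (hp : 1 ≤ p)
    (ω : Measure (Fin n → ℝ)) {σ μ : Measure (Fin n → ℝ)} [IsLocallyFiniteMeasure σ]
    [IsFiniteMeasure μ] (hμσ : μ ≤ σ) {t : ℝ≥0∞} (ht : t ≠ 0) :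
    t ^ p * ω {x | t < dyadicMaximal μ x} ≤ Ap p ω σ ^ p * μ {x | t < dyadicMaximal μ x} := by
  refine mul_measure_setOf_lt_dyadicMaximal_le hn μ ω ht fun D hD => ?_
  have h := rpow_mul_measure_le_Ap_rpow_mul hp ω σ D.toCube (t := t) (a := μ D.set)
  have hσD := Cube.measure_lt_top σ D.toCube
  simp only [D.set_toCube, D.vol_toCube] at h hσD
  exact h hD.le (hμσ _) hσD.ne

theorem ENNReal.exists_two_pow_mul_lt_and_le {l a : ℝ≥0∞} (hl : l ≠ 0) (hla : l < a)
    (ha : a ≠ ⊤) : ∃ j : ℕ, 2 ^ j * l < a ∧ a ≤ 2 ^ (j + 1) * l := by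
  have hex : ∃ j : ℕ, a ≤ 2 ^ (j + 1) * l := by
    obtain ⟨m, hm⟩ := ENNReal.exists_nat_gt (ENNReal.div_ne_top ha hl)
    refine ⟨m, (ENNReal.div_lt_iff (.inl hl) (.inl hla.ne_top) |>.mp hm).le.trans ?_⟩
    gcongr
    exact_mod_cast Nat.lt_two_pow_self.le.trans (Nat.pow_le_pow_right two_pos m.le_succ)
  refine ⟨Nat.find hex, ?_, Nat.find_spec hex⟩
  rcases h : Nat.find hex with _ | i
  · simpa using hla
  · exact not_le.mp (Nat.find_min hex (h ▸ i.lt_succ_self))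

theorem ENNReal.rpow_le_add_tsum_indicator {p : ℝ} (hp : 0 ≤ p) {l : ℝ≥0∞} (hl : l ≠ 0)
    (a : ℝ≥0∞) : a ^ p ≤
      l ^ p + ∑' j : ℕ, (Set.Ioi (2 ^ j * l)).indicator (fun _ => (2 ^ (j + 1) * l) ^ p) a := by
  rcases le_or_gt a l with hal | hla
  · exact (ENNReal.rpow_le_rpow hal hp).trans le_self_add
  have hl' : l ≠ ⊤ := hla.ne_top
  refine le_add_left ?_
  rcases eq_or_ne a ⊤ with rfl | ha
  · have hlp : l ^ p ≠ 0 := (ENNReal.rpow_pos (pos_iff_ne_zero.mpr hl) hl').ne'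
    calc ⊤ ^ p ≤ ⊤ := le_top
      _ = ∑' _ : ℕ, l ^ p := (ENNReal.tsum_const_eq_top_of_ne_zero hlp).symm
      _ ≤ _ := ENNReal.tsum_le_tsum fun j => by
        rw [Set.indicator_of_mem (Set.mem_Ioi.mpr (mul_lt_top (by simp) hl'.lt_top))]
        gcongr
        exact le_mul_of_one_le_left' (one_le_pow₀ one_le_two)
  obtain ⟨j, hjl, hj⟩ := ENNReal.exists_two_pow_mul_lt_and_le hl hla ha
  calc a ^ p ≤ (2 ^ (j + 1) * l) ^ p := ENNReal.rpow_le_rpow hj hp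
    _ = (Set.Ioi (2 ^ j * l)).indicator (fun _ => (2 ^ (j + 1) * l) ^ p) a :=
        (Set.indicator_of_mem (Set.mem_Ioi.mpr hjl) (fun _ => _)).symm
    _ ≤ _ := ENNReal.le_tsum j

theorem lintegral_rpow_le_add_tsum {X : Type*} [MeasurableSpace X] (ν : Measure X)
    {f : X → ℝ≥0∞} (hf : Measurable f) {p : ℝ} (hp : 0 ≤ p) {l : ℝ≥0∞} (hl : l ≠ 0) :
    ∫⁻ x, f x ^ p ∂ν ≤
      l ^ p * ν Set.univ + ∑' j : ℕ, (2 ^ (j + 1) * l) ^ p * ν {x | 2 ^ j * l < f x} := by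
  calc ∫⁻ x, f x ^ p ∂ν
      ≤ ∫⁻ x, l ^ p + ∑' j : ℕ,
          (f ⁻¹' Set.Ioi (2 ^ j * l)).indicator (fun _ => (2 ^ (j + 1) * l) ^ p) x ∂ν :=
        lintegral_mono fun x => ENNReal.rpow_le_add_tsum_indicator hp hl (f x)
    _ = _ := by
        rw [lintegral_add_left measurable_const, lintegral_const, lintegral_tsum fun j =>
          (measurable_const.indicator (hf measurableSet_Ioi)).aemeasurable]
        simp_rw [lintegral_indicator_const (hf measurableSet_Ioi)]
        rfl

def AInftyOn {n : ℕ} (σ : Measure (Fin n → ℝ)) (C : ℝ≥0∞) (ε : ℝ) (I : Cube n) : Prop :=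
  ∀ E ⊆ I.set, MeasurableSet E → ∀ r : ℝ≥0∞, r ≠ ⊤ → volume E ≤ r * ENNReal.ofReal I.vol →
    σ E ≤ C * r ^ ε * σ I.set

theorem IsAInfty.exists_aInftyOn {n : ℕ} {σ : Measure (Fin n → ℝ)} (hσ : IsAInfty σ) :
    ∃ C : ℝ≥0∞, C ≠ ⊤ ∧ ∃ ε > (0 : ℝ), ∀ I : Cube n, AInftyOn σ C ε I := by
  obtain ⟨C, hC, ε, hε, h⟩ := hσ
  refine ⟨ENNReal.ofReal C, ofReal_ne_top, ε, hε, fun I E hEI hE r hr hvol => ?_⟩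
  refine (h I E hEI hE).trans ?_
  rw [← ENNReal.ofReal_toReal hr, ENNReal.ofReal_rpow_of_nonneg toReal_nonneg hε.le,
    ← ENNReal.ofReal_mul hC.le]
  gcongr
  · exact div_nonneg toReal_nonneg I.vol_pos.le
  rw [div_le_iff₀ I.vol_pos]
  refine ENNReal.toReal_le_of_le_ofReal (by positivity [I.vol_pos]) ?_
  rwa [ENNReal.ofReal_mul toReal_nonneg, ENNReal.ofReal_toReal hr]

/-- `A_∞` upgrades the weak-type bound `|{M_d(1_I σ) > t}| ≤ σ(I)/t` to a bound on the
`σ`-measure of the level set. -/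
theorem restrict_setOf_lt_dyadicMaximal_le {n : ℕ} (hn : 0 < n) {σ : Measure (Fin n → ℝ)}
    {I : Cube n} {C : ℝ≥0∞} {ε : ℝ} (hσ : AInftyOn σ C ε I) {t r : ℝ≥0∞} (ht₀ : t ≠ 0)
    (ht : t ≠ ⊤) (hr : r ≠ ⊤) (hσI : σ I.set ≤ t * (r * ENNReal.ofReal I.vol)) :
    σ.restrict I.set {x | t < dyadicMaximal (σ.restrict I.set) x} ≤ C * r ^ ε * σ I.set := by
  set Ω := {x | t < dyadicMaximal (σ.restrict I.set) x}
  have : IsFiniteMeasure (σ.restrict I.set) := isFiniteMeasure_restrict.mpr <|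
    ne_top_of_le_ne_top (mul_ne_top ht (mul_ne_top hr ofReal_ne_top)) hσI
  have hΩ : MeasurableSet Ω :=
    measurableSet_lt (measurable_const (a := t)) (measurable_dyadicMaximal _)
  rw [Measure.restrict_apply hΩ]
  refine hσ _ Set.inter_subset_right (hΩ.inter I.measurableSet_set) r hr ?_
  rw [← ENNReal.mul_le_mul_iff_right ht₀ ht]
  calc t * volume (Ω ∩ I.set) ≤ t * volume Ω := by
        gcongr
        exact Set.inter_subset_left
    _ ≤ σ.restrict I.set Ω := mul_volume_setOf_lt_dyadicMaximal_le hn _ ht₀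
    _ ≤ σ.restrict I.set Set.univ := measure_mono (Set.subset_univ _)
    _ ≤ t * (r * ENNReal.ofReal I.vol) := by rwa [Measure.restrict_apply_univ]

theorem rpow_mul_restrict_setOf_lt_dyadicMaximal_le {n : ℕ} (hn : 0 < n) {p : ℝ} (hp : 1 ≤ p)
    (ω : Measure (Fin n → ℝ)) {σ : Measure (Fin n → ℝ)} [IsLocallyFiniteMeasure σ] {I : Cube n}
    {C : ℝ≥0∞} {ε : ℝ} (hσ : AInftyOn σ C ε I) {avg : ℝ≥0∞}
    (havg : avg * ENNReal.ofReal I.vol = σ I.set) (havg₀ : avg ≠ 0) (havg_top : avg ≠ ⊤)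
    (j : ℕ) :
    (2 ^ (j + 1) * avg) ^ p *
        ω.restrict I.set {x | 2 ^ j * avg < dyadicMaximal (σ.restrict I.set) x} ≤
      2 ^ p * Ap p ω σ ^ p * C * (2⁻¹ ^ ε) ^ j * σ I.set := by
  set Ω := {x | 2 ^ j * avg < dyadicMaximal (σ.restrict I.set) x}
  have : IsFiniteMeasure (σ.restrict I.set) :=
    isFiniteMeasure_restrict.mpr (Cube.measure_lt_top σ I).ne
  have ht₀ : 2 ^ j * avg ≠ 0 := mul_ne_zero (by simp) havg₀
  have ht : 2 ^ j * avg ≠ ⊤ := mul_ne_top (by simp) havg_top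
  have hσt : σ I.set ≤ 2 ^ j * avg * (2⁻¹ ^ j * ENNReal.ofReal I.vol) := by
    rw [mul_mul_mul_comm, ← mul_pow, ENNReal.mul_inv_cancel two_ne_zero ofNat_ne_top, one_pow,
      one_mul, havg]
  calc (2 ^ (j + 1) * avg) ^ p * ω.restrict I.set Ω
      ≤ 2 ^ p * ((2 ^ j * avg) ^ p * ω Ω) := by
        rw [pow_succ', mul_assoc, ENNReal.mul_rpow_of_nonneg _ _ (by linarith), mul_assoc]
        gcongr 2 ^ p * (_ * ?_)
        exact Measure.restrict_apply_le _ _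
    _ ≤ 2 ^ p * (Ap p ω σ ^ p * σ.restrict I.set Ω) := by
        gcongr 2 ^ p * ?_
        exact rpow_mul_measure_setOf_lt_dyadicMaximal_le hn hp ω Measure.restrict_le_self ht₀
    _ ≤ 2 ^ p * (Ap p ω σ ^ p * (C * (2⁻¹ ^ j) ^ ε * σ I.set)) := by
        gcongr 2 ^ p * (_ * ?_)
        exact restrict_setOf_lt_dyadicMaximal_le hn hσ ht₀ ht (by simp) hσt
    _ = 2 ^ p * Ap p ω σ ^ p * C * (2⁻¹ ^ ε) ^ j * σ I.set := by
        rw [← ENNReal.rpow_natCast, ← ENNReal.rpow_mul, mul_comm (j : ℝ), ENNReal.rpow_mul,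
          ENNReal.rpow_natCast]
        ring

theorem lintegral_dyadicMaximal_rpow_le {n : ℕ} (hn : 0 < n) {p : ℝ} (hp : 1 ≤ p)
    (ω σ : Measure (Fin n → ℝ)) [IsLocallyFiniteMeasure σ] (I : Cube n) {C : ℝ≥0∞} {ε : ℝ}
    (hσ : AInftyOn σ C ε I) :
    ∫⁻ x in I.set, dyadicMaximal (σ.restrict I.set) x ^ p ∂ω ≤
      Ap p ω σ ^ p * (1 + 2 ^ p * C * (1 - 2⁻¹ ^ ε)⁻¹) * σ I.set := by
  have hp0 : 0 < p := zero_lt_one.trans_le hp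
  have hσI : σ I.set ≠ ⊤ := (Cube.measure_lt_top σ I).ne
  rcases eq_or_ne (σ I.set) 0 with hσ0 | hσ0
  · simp [Measure.restrict_eq_zero.mpr hσ0, dyadicMaximal, ENNReal.zero_rpow_of_pos hp0]
  have hv : ENNReal.ofReal I.vol ≠ 0 := (ENNReal.ofReal_pos.mpr I.vol_pos).ne'
  set avg := σ I.set / ENNReal.ofReal I.vol
  have havg : avg * ENNReal.ofReal I.vol = σ I.set := ENNReal.div_mul_cancel hv ofReal_ne_top
  have havg₀ : avg ≠ 0 := (ENNReal.div_pos hσ0 ofReal_ne_top).ne'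
  calc ∫⁻ x in I.set, dyadicMaximal (σ.restrict I.set) x ^ p ∂ω
      ≤ avg ^ p * ω.restrict I.set Set.univ + ∑' j : ℕ, (2 ^ (j + 1) * avg) ^ p *
          ω.restrict I.set {x | 2 ^ j * avg < dyadicMaximal (σ.restrict I.set) x} :=
        lintegral_rpow_le_add_tsum _ (measurable_dyadicMaximal _) hp0.le havg₀
    _ ≤ Ap p ω σ ^ p * σ I.set +
          ∑' j : ℕ, 2 ^ p * Ap p ω σ ^ p * C * (2⁻¹ ^ ε) ^ j * σ I.set := by
        rw [Measure.restrict_apply_univ]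
        exact add_le_add (rpow_mul_measure_le_Ap_rpow_mul hp ω σ I havg.le le_rfl hσI)
          (ENNReal.tsum_le_tsum <| rpow_mul_restrict_setOf_lt_dyadicMaximal_le hn hp ω hσ havg
            havg₀ (ENNReal.div_ne_top hσI hv))
    _ = Ap p ω σ ^ p * (1 + 2 ^ p * C * (1 - 2⁻¹ ^ ε)⁻¹) * σ I.set := by
        rw [ENNReal.tsum_mul_right, ENNReal.tsum_mul_left, ENNReal.tsum_geometric]
        ring

theorem stmt_10_general (n : ℕ) (hn : 0 < n) (p : ℝ) (hp : 1 < p)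
    (ω σ : Measure (Fin n → ℝ)) [IsLocallyFiniteMeasure σ]
    (hσ : IsAInfty σ) (hAp : Ap p ω σ < ⊤) :
    ∃ C > (0:ℝ), ∀ I : Cube n,
      ∫⁻ x in I.set, (dyadicMaximal (σ.restrict I.set) x) ^ p ∂ω ≤
        ENNReal.ofReal C * σ I.set := by
  obtain ⟨C, hC, ε, hε, hAinf⟩ := hσ.exists_aInftyOn
  set K := Ap p ω σ ^ p * (1 + 2 ^ p * C * (1 - 2⁻¹ ^ ε)⁻¹)
  have hK : K ≠ ⊤ := by
    have hq : (2⁻¹ : ℝ≥0∞) ^ ε < 1 := ENNReal.rpow_lt_one (by norm_num) hε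
    refine mul_ne_top (rpow_ne_top_of_nonneg (by linarith) hAp.ne)
      (add_ne_top.mpr ⟨one_ne_top, ?_⟩)
    exact mul_ne_top (mul_ne_top (rpow_ne_top_of_nonneg (by linarith) ofNat_ne_top) hC)
      (inv_ne_top.mpr (tsub_pos_of_lt hq).ne')
  refine ⟨K.toReal + 1, by positivity, fun I => ?_⟩
  calc _ ≤ K * σ I.set := lintegral_dyadicMaximal_rpow_le hn hp.le ω σ I (hAinf I)
    _ ≤ ENNReal.ofReal (K.toReal + 1) * σ I.set := by
        gcongr
        exact (ENNReal.le_ofReal_iff_toReal_le hK (by positivity)).mpr (by linarith)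

/-- If `σ ∈ A_∞` and the classical two-weight `A_p(ω,σ)` characteristic is
finite, then the dyadic Sawyer testing condition holds: `∫_I (M_d(1_I σ))^p dω ≤ C' σ(I)`. -/
theorem stmt_10 (n : ℕ) (hn : 0 < n) (p : ℝ) (hp : 1 < p)
    (ω σ : Measure (Fin n → ℝ)) [IsLocallyFiniteMeasure ω] [IsLocallyFiniteMeasure σ]
    (hσ : IsAInfty σ) (hAp : Ap p ω σ < ⊤) :
    ∃ C > (0:ℝ), ∀ I : Cube n,
      ∫⁻ x in I.set, (dyadicMaximal (σ.restrict I.set) x) ^ p ∂ω ≤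
        ENNReal.ofReal C * σ I.set :=
  stmt_10_general n hn p hp ω σ hσ hAp
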